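/- Let T be the tree with edges {u1u3, u2u3, u3u4, u4u5, u3u'3, u'3u''3, u''3v3, u''3v'3} (so u3 has neighbors u1,u2,u4,u'3; u4 has neighbor u5; u'3 has neighbor u''3; and u''3 has additional neighbors v3, v'3). If L is a list assignment with |L(u1)| ≥ 3, |L(u2)| ≥ 2, |L(u3)| ≥ 4, |L(u4)| ≥ 5, |L(u5)| ≥ 2, |L(u'3)| ≥ 6, |L(u''3)| ≥ 4, |L(v3)| ≥ 3, |L(v'3)| ≥ 2, then T admits a 2-distance L-coloring. -/

import Mathlib

/-!
Two vertices are at distance at most 2 in `T7` iff they lie in a common closed neighbourhood, and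
every closed neighbourhood of `T7` is contained in `N[u3] = {u1, u2, u3, u4, u'3}`, `N[u4]`,
`N[u'3]` or `N[u''3]`; so we need list colours that are distinct on each of these four sets.

Colour `v'3` and `v3`, then choose the colour of `u'3` together with a colour `x` reserved for `u1`
such that `u2` keeps two colours avoiding both (when `L(u2)` is small, the six colours of `u'3`
allow avoiding it), and then colour `u''3`. What remains is the clique `u1u2u3u4` with `u5`
attached to `u3` and `u4`, with residual lists of sizes at least 2, 2, 2, 4, 2. It is coloured
greedily if `u5` keeps two colours besides the colour of `u3`; otherwise either `u5` reuses the
colour `x` of `u1`, or `L(u3) ⊆ L(u5)` with `|L(u5)| = 2`, and `u4` takes a colour outside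
`L(u5)`.
-/

open Finset

/-- The tree of the corresponding configuration, with vertices 0 = u1, 1 = u2, 2 = u3, 3 = u4, 4 = u5, 5 = u'3, 6 = u''3, 7 = v3, 8 = v'3. -/
def T7 : SimpleGraph (Fin 9) :=
  SimpleGraph.fromRel (fun u v => (u = 0 ∧ v = 2) ∨ (u = 1 ∧ v = 2) ∨ (u = 2 ∧ v = 3) ∨ (u = 3 ∧ v = 4) ∨ (u = 2 ∧ v = 5) ∨ (u = 5 ∧ v = 6) ∨ (u = 6 ∧ v = 7) ∨ (u = 6 ∧ v = 8))

section ListColoring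

variable {α : Type*} [DecidableEq α]

lemma exists_mem_ne_ne_ne {s : Finset α} (hs : 3 < #s) (a b c : α) :
    ∃ y ∈ s, y ≠ a ∧ y ≠ b ∧ y ≠ c := by
  obtain ⟨y, hy, habc⟩ := exists_mem_notMem_of_card_lt_card (card_le_three.trans_lt hs)
  exact ⟨y, hy, by simpa [not_or] using habc⟩

lemma exists_two_le_card_erase_erase {A₀ A₁ A₅ : Finset α}
    (h₀ : 3 ≤ #A₀) (h₁ : 2 ≤ #A₁) (h₅ : 4 ≤ #A₅) :
    ∃ c ∈ A₅, ∃ x ∈ A₀, x ≠ c ∧ 2 ≤ #((A₁.erase c).erase x) := by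
  rcases Nat.lt_or_ge #A₁ 3 with h₁' | h₁'
  · obtain ⟨x, hx, hxA₁⟩ := exists_mem_notMem_of_card_lt_card (s := A₁) (t := A₀) (by omega)
    obtain ⟨c, hc, hcA₁⟩ := exists_mem_notMem_of_card_lt_card (s := insert x A₁) (t := A₅)
      ((card_insert_le x A₁).trans_lt (by omega))
    rw [mem_insert, not_or] at hcA₁
    refine ⟨c, hc, x, hx, Ne.symm hcA₁.1, ?_⟩
    rwa [erase_eq_of_notMem hcA₁.2, erase_eq_of_notMem hxA₁]
  obtain ⟨c, hc, hc₁⟩ : ∃ c ∈ A₅, 3 ≤ #(A₁.erase c) := by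
    rcases Nat.lt_or_ge #A₁ 4 with h₁'' | h₁''
    · obtain ⟨c, hc, hcA₁⟩ := exists_mem_notMem_of_card_lt_card (s := A₁) (t := A₅) (by omega)
      exact ⟨c, hc, by rw [erase_eq_of_notMem hcA₁]; exact h₁'⟩
    · obtain ⟨c, hc⟩ := card_pos.mp (show 0 < #A₅ by omega)
      exact ⟨c, hc, by grind [pred_card_le_card_erase]⟩
  obtain ⟨x, hx, hxc⟩ := exists_mem_ne (s := A₀) (by omega) c
  exact ⟨c, hc, x, hx, hxc, by grind [pred_card_le_card_erase]⟩

lemma exists_triangle_coloring {A₀ A₁ : Finset α} {x : α} (hx : x ∈ A₀) (h₀ : 2 ≤ #A₀)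
    (h₁ : 2 ≤ #(A₁.erase x)) (c : α) : ∃ c₀ ∈ A₀, ∃ c₁ ∈ A₁, c₀ ≠ c₁ ∧ c₀ ≠ c ∧ c₁ ≠ c := by
  by_cases hc : c = x
  · subst hc
    obtain ⟨c₀, hc₀, hc₀c⟩ := exists_mem_ne (s := A₀) (by omega) c
    obtain ⟨c₁, hc₁, hc₁c₀⟩ := exists_mem_ne (s := A₁.erase c) (by omega) c₀
    obtain ⟨hc₁c, hc₁⟩ := mem_erase.mp hc₁
    exact ⟨c₀, hc₀, c₁, hc₁, hc₁c₀.symm, hc₀c, hc₁c⟩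
  · obtain ⟨c₁, hc₁, hc₁c⟩ := exists_mem_ne (s := A₁.erase x) (by omega) c
    obtain ⟨hc₁x, hc₁⟩ := mem_erase.mp hc₁
    exact ⟨x, hx, c₁, hc₁, hc₁x.symm, Ne.symm hc, hc₁c⟩

lemma exists_K4_pendant_coloring {A₀ A₁ A₂ A₃ B : Finset α} {x : α} (hx : x ∈ A₀)
    (h₀ : 2 ≤ #A₀) (h₁ : 2 ≤ #(A₁.erase x)) (h₂ : 2 ≤ #A₂) (h₃ : 4 ≤ #A₃) (hB : 2 ≤ #B) :
    ∃ c₀ ∈ A₀, ∃ c₁ ∈ A₁, ∃ c₂ ∈ A₂, ∃ c₃ ∈ A₃, ∃ c₄ ∈ B,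
      c₀ ≠ c₁ ∧ c₀ ≠ c₂ ∧ c₀ ≠ c₃ ∧ c₁ ≠ c₂ ∧ c₁ ≠ c₃ ∧ c₂ ≠ c₃ ∧ c₂ ≠ c₄ ∧ c₃ ≠ c₄ := by
  by_cases hxB : x ∈ B
  · obtain ⟨c₂, hc₂, hc₂x⟩ := exists_mem_ne (s := A₂) (by omega) x
    obtain ⟨c₁, hc₁, hc₁c₂⟩ := exists_mem_ne (s := A₁.erase x) (by omega) c₂
    obtain ⟨hc₁x, hc₁⟩ := mem_erase.mp hc₁
    obtain ⟨c₃, hc₃, hc₃x, hc₃c₁, hc₃c₂⟩ := exists_mem_ne_ne_ne (s := A₃) (by omega) x c₁ c₂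
    exact ⟨x, hx, c₁, hc₁, c₂, hc₂, c₃, hc₃, x, hxB, hc₁x.symm, hc₂x.symm, hc₃x.symm, hc₁c₂,
      hc₃c₁.symm, hc₃c₂.symm, hc₂x, hc₃x⟩
  by_cases hA₂B : A₂ ⊆ B ∧ #B ≤ 2
  · obtain ⟨hA₂B, hB₂⟩ := hA₂B
    obtain ⟨c₃, hc₃, hc₃xB⟩ := exists_mem_notMem_of_card_lt_card (s := insert x B) (t := A₃)
      ((card_insert_le x B).trans_lt (by omega))
    rw [mem_insert, not_or] at hc₃xB
    obtain ⟨c₁, hc₁, hc₁c₃⟩ := exists_mem_ne (s := A₁.erase x) (by omega) c₃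
    obtain ⟨hc₁x, hc₁⟩ := mem_erase.mp hc₁
    obtain ⟨c₂, hc₂, hc₂c₁⟩ := exists_mem_ne (s := A₂) (by omega) c₁
    obtain ⟨c₄, hc₄, hc₄c₂⟩ := exists_mem_ne (s := B) (by omega) c₂
    have hc₂B := hA₂B hc₂
    exact ⟨x, hx, c₁, hc₁, c₂, hc₂, c₃, hc₃, c₄, hc₄, hc₁x.symm,
      (ne_of_mem_of_not_mem hc₂B hxB).symm, Ne.symm hc₃xB.1, hc₂c₁.symm, hc₁c₃,
      ne_of_mem_of_not_mem hc₂B hc₃xB.2, hc₄c₂.symm, (ne_of_mem_of_not_mem hc₄ hc₃xB.2).symm⟩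
  obtain ⟨c₂, hc₂, hBc₂⟩ : ∃ c₂ ∈ A₂, 2 ≤ #(B.erase c₂) := by
    rw [not_and_or, not_subset, not_le] at hA₂B
    rcases hA₂B with ⟨c₂, hc₂, hc₂B⟩ | hB₃
    · exact ⟨c₂, hc₂, by rwa [erase_eq_of_notMem hc₂B]⟩
    · obtain ⟨c₂, hc₂⟩ := card_pos.mp (show 0 < #A₂ by omega)
      exact ⟨c₂, hc₂, by grind [pred_card_le_card_erase]⟩
  obtain ⟨c₀, hc₀, c₁, hc₁, hc₀c₁, hc₀c₂, hc₁c₂⟩ := exists_triangle_coloring hx h₀ h₁ c₂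
  obtain ⟨c₃, hc₃, hc₃c₀, hc₃c₁, hc₃c₂⟩ := exists_mem_ne_ne_ne (s := A₃) (by omega) c₀ c₁ c₂
  obtain ⟨c₄, hc₄, hc₄c₃⟩ := exists_mem_ne (s := B.erase c₂) (by omega) c₃
  obtain ⟨hc₄c₂, hc₄⟩ := mem_erase.mp hc₄
  exact ⟨c₀, hc₀, c₁, hc₁, c₂, hc₂, c₃, hc₃, c₄, hc₄, hc₀c₁, hc₀c₂, hc₃c₀.symm, hc₁c₂,
    hc₃c₁.symm, hc₃c₂.symm, hc₄c₂.symm, hc₄c₃.symm⟩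

end ListColoring

instance : DecidableRel T7.Adj := fun u v => decidable_of_iff' _ (SimpleGraph.fromRel_adj _ u v)

def T7.closedNbhdCover : List (List (Fin 9)) := [[0, 1, 2, 3, 5], [2, 3, 4], [2, 5, 6], [5, 6, 7, 8]]

lemma T7.exists_mem_closedNbhdCover_of_dist_le_two :
    ∀ u v : Fin 9, (T7.Adj u v ∨ ∃ w, T7.Adj u w ∧ T7.Adj w v) →
      ∃ C ∈ T7.closedNbhdCover, u ∈ C ∧ v ∈ C := by
  decide

/-- The configuration admits a 2-distance coloring from the given lists. -/
theorem colorable_iii (L : Fin 9 → Finset ℕ)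
    (h0 : 3 ≤ (L 0).card)
    (h1 : 2 ≤ (L 1).card)
    (h2 : 4 ≤ (L 2).card)
    (h3 : 5 ≤ (L 3).card)
    (h4 : 2 ≤ (L 4).card)
    (h5 : 6 ≤ (L 5).card)
    (h6 : 4 ≤ (L 6).card)
    (h7 : 3 ≤ (L 7).card)
    (h8 : 2 ≤ (L 8).card) :
    ∃ φ : Fin 9 → ℕ, (∀ v, φ v ∈ L v) ∧
      ∀ u v : Fin 9, u ≠ v →
        (T7.Adj u v ∨ ∃ w, T7.Adj u w ∧ T7.Adj w v) → φ u ≠ φ v := by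
  obtain ⟨c₈, hc₈⟩ := card_pos.mp (show 0 < #(L 8) by omega)
  obtain ⟨c₇, hc₇, hc₇₈⟩ := exists_mem_ne (s := L 7) (by omega) c₈
  obtain ⟨c₅, hc₅, x, hx, hxc₅, hx₁⟩ := exists_two_le_card_erase_erase
    (A₅ := ((L 5).erase c₇).erase c₈) h0 h1 (by grind [pred_card_le_card_erase])
  obtain ⟨c₆, hc₆, hc₆₅, hc₆₇, hc₆₈⟩ := exists_mem_ne_ne_ne (s := L 6) (by omega) c₅ c₇ c₈
  obtain ⟨c₀, hc₀, c₁, hc₁, c₂, hc₂, c₃, hc₃, c₄, hc₄, hne⟩ := exists_K4_pendant_coloring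
    (A₂ := ((L 2).erase c₅).erase c₆) (A₃ := (L 3).erase c₅) (B := L 4)
    (mem_erase.mpr ⟨hxc₅, hx⟩) (by grind [pred_card_le_card_erase]) hx₁
    (by grind [pred_card_le_card_erase]) (by grind [pred_card_le_card_erase]) h4
  simp only [mem_erase] at hc₀ hc₁ hc₂ hc₃ hc₅
  refine ⟨![c₀, c₁, c₂, c₃, c₄, c₅, c₆, c₇, c₈], by simp [Fin.forall_fin_succ, *],
    fun u v huv hdist => ?_⟩
  obtain ⟨C, hC, hu, hv⟩ := T7.exists_mem_closedNbhdCover_of_dist_le_two u v hdist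
  have hnodup : ∀ C ∈ T7.closedNbhdCover, (C.map ![c₀, c₁, c₂, c₃, c₄, c₅, c₆, c₇, c₈]).Nodup := by
    simp [T7.closedNbhdCover, *, hc₆₅.symm]
  exact fun hφ => huv (List.inj_on_of_nodup_map (hnodup C hC) hu hv hφ)
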